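/- The strands algebra A(n,k) is an associative algebra: for generators (S,T,φ), (T,V,ψ), (V,W,χ), where S,T,V,W are k-element subsets of {1,…,n} and the maps are bijections, the product defined by (S,T,φ)·(U,V,ψ) = (S,V,ψ∘φ) if T = U and inv(φ) + inv(ψ) = inv(ψ∘φ), and 0 otherwise, satisfies ((S,T,φ)·(T,V,ψ))·(V,W,χ) = (S,T,φ)·((T,V,ψ)·(V,W,χ)). -/

import Mathlib

/-
Count inversions on ordered pairs: a pair `(a, b)` of points of `S` is followed along the chain
`(a, b) ↦ (φ a, φ b) ↦ (ψ (φ a), ψ (φ b)) ↦ …`, and a map inverts it when it reverses the order of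
the two points. Each inversion of `f` on `S` is counted twice this way, the injective maps keep
distinct points distinct, and transporting the inversions of `ψ` on `T` back to `S` along the
bijection `φ` gives `inv φ + inv ψ = inv (ψ ∘ φ) + #{pairs inverted by both φ and ψ}`.
So a product of generators is nonzero iff no pair is inverted twice, and for a triple product
both bracketings are nonzero iff no pair is inverted at two of the three steps.
-/

/-- A generator of the strands algebra `A(n,k)`: a triple `(S, T, φ)` consisting of two
subsets of `{1, …, n}` and a map between them.  (The constraints on the data are imposed
as hypotheses of the associativity theorem below.) -/
structure Strand where
  S : Finset ℕ
  T : Finset ℕ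
  f : ℕ → ℕ

/-- The number of inversions of `f` on the finite set `S`. -/
def inversions (S : Finset ℕ) (f : ℕ → ℕ) : ℕ :=
  ((S ×ˢ S).filter (fun p => p.1 < p.2 ∧ f p.2 < f p.1)).card

/-- The product of two strand generators over `F = ℤ/2`: it is the composite generator
`(S, V, ψ ∘ φ)` when the middle sets match and inversions are additive, and `0`
(encoded as `none`) otherwise. -/
def strandMul (x y : Strand) : Option Strand :=
  if x.T = y.S ∧ inversions x.S x.f + inversions y.S y.f = inversions x.S (y.f ∘ x.f)
  then some ⟨x.S, y.T, y.f ∘ x.f⟩ else none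

open Finset

abbrev Discordant (p q : ℕ × ℕ) : Prop :=
  p.1 < p.2 ∧ q.2 < q.1 ∨ p.2 < p.1 ∧ q.1 < q.2

lemma two_mul_inversions (S : Finset ℕ) (f : ℕ → ℕ) :
    2 * inversions S f = #{p ∈ S ×ˢ S | Discordant p (f p.1, f p.2)} := by
  rw [filter_or, card_union_of_disjoint, two_mul]
  · congr 1
    refine card_nbij Prod.swap ?_ Prod.swap_injective.injOn ?_
    · intro p hp
      simp_all
    · intro p hp
      exact ⟨p.swap, by simp_all⟩
  · exact disjoint_filter.2 fun p _ h h' => by omega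

lemma card_filter_product_of_bijOn {α β : Type*} {S : Finset α} {T : Finset β} {φ : α → β}
    (hφ : Set.BijOn φ S T) (P : β × β → Prop) [DecidablePred P] :
    #{p ∈ S ×ˢ S | P (φ p.1, φ p.2)} = #{q ∈ T ×ˢ T | P q} := by
  have h := hφ.prodMap hφ
  rw [← coe_product, ← coe_product] at h
  rw [card_filter, card_filter]
  exact sum_nbij _ h.mapsTo h.injOn h.surjOn fun _ _ => rfl

lemma indicator_discordant_add {p q r : ℕ × ℕ} (hq : q.1 = q.2 ↔ p.1 = p.2)
    (hr : r.1 = r.2 ↔ q.1 = q.2) :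
    (if Discordant p q then 1 else 0) + (if Discordant q r then 1 else 0) =
      (if Discordant p r then 1 else 0) +
        2 * (if Discordant p q ∧ Discordant q r then 1 else 0) := by
  split_ifs <;> unfold Discordant at * <;> omega

lemma inversions_add_inversions {S T : Finset ℕ} {φ ψ : ℕ → ℕ} (hφ : Set.BijOn φ S T)
    (hψ : Set.InjOn ψ T) :
    inversions S φ + inversions T ψ = inversions S (ψ ∘ φ) +
      #{p ∈ S ×ˢ S | Discordant p (φ p.1, φ p.2) ∧
        Discordant (φ p.1, φ p.2) (ψ (φ p.1), ψ (φ p.2))} := by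
  refine Nat.eq_of_mul_eq_mul_left two_pos ?_
  simp only [mul_add, two_mul_inversions,
    ← card_filter_product_of_bijOn hφ (fun q => Discordant q (ψ q.1, ψ q.2)), card_filter,
    ← sum_add_distrib, mul_sum]
  refine sum_congr rfl fun p hp => ?_
  rw [mem_product] at hp
  exact indicator_discordant_add (hφ.injOn.eq_iff hp.1 hp.2)
    (hψ.eq_iff (hφ.mapsTo hp.1) (hφ.mapsTo hp.2))

lemma inversions_add_inversions_eq_iff {S T : Finset ℕ} {φ ψ : ℕ → ℕ} (hφ : Set.BijOn φ S T)
    (hψ : Set.InjOn ψ T) :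
    inversions S φ + inversions T ψ = inversions S (ψ ∘ φ) ↔
      ∀ p ∈ S ×ˢ S, ¬(Discordant p (φ p.1, φ p.2) ∧
        Discordant (φ p.1, φ p.2) (ψ (φ p.1), ψ (φ p.2))) := by
  rw [inversions_add_inversions hφ hψ, Nat.add_eq_left, card_eq_zero, filter_eq_empty_iff]

lemma forall_mem_product_of_bijOn {α β : Type*} {S : Finset α} {T : Finset β} {φ : α → β}
    (hφ : Set.BijOn φ S T) {P : β × β → Prop} :
    (∀ q ∈ T ×ˢ T, P q) ↔ ∀ p ∈ S ×ˢ S, P (φ p.1, φ p.2) := by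
  have h := hφ.prodMap hφ
  rw [← coe_product, ← coe_product] at h
  exact h.forall

lemma discordant_chain_iff {p q r s : ℕ × ℕ} (hq : q.1 = q.2 ↔ p.1 = p.2)
    (hr : r.1 = r.2 ↔ q.1 = q.2) (hs : s.1 = s.2 ↔ r.1 = r.2) :
    (¬(Discordant p q ∧ Discordant q r) ∧ ¬(Discordant p r ∧ Discordant r s)) ↔
      (¬(Discordant q r ∧ Discordant r s) ∧ ¬(Discordant p q ∧ Discordant q s)) := by
  omega

theorem inversions_additive_assoc {S T V : Finset ℕ} {φ ψ χ : ℕ → ℕ} (hφ : Set.BijOn φ S T)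
    (hψ : Set.BijOn ψ T V) (hχ : Set.InjOn χ V) :
    (inversions S φ + inversions T ψ = inversions S (ψ ∘ φ) ∧
        inversions S (ψ ∘ φ) + inversions V χ = inversions S (χ ∘ ψ ∘ φ)) ↔
      (inversions T ψ + inversions V χ = inversions T (χ ∘ ψ) ∧
        inversions S φ + inversions T (χ ∘ ψ) = inversions S ((χ ∘ ψ) ∘ φ)) := by
  rw [inversions_add_inversions_eq_iff hφ hψ.injOn,
    inversions_add_inversions_eq_iff (hψ.comp hφ) hχ, inversions_add_inversions_eq_iff hψ hχ,
    inversions_add_inversions_eq_iff hφ (hχ.comp hψ.injOn hψ.mapsTo),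
    forall_mem_product_of_bijOn hφ, ← forall₂_and, ← forall₂_and]
  refine forall₂_congr fun p hp => ?_
  rw [mem_product] at hp
  have hφ_eq := hφ.injOn.eq_iff hp.1 hp.2
  have hψ_eq := hψ.injOn.eq_iff (hφ.mapsTo hp.1) (hφ.mapsTo hp.2)
  have hχ_eq := hχ.eq_iff (hψ.mapsTo (hφ.mapsTo hp.1)) (hψ.mapsTo (hφ.mapsTo hp.2))
  exact discordant_chain_iff hφ_eq hψ_eq hχ_eq

lemma strandMul_mk (S T V : Finset ℕ) (φ ψ : ℕ → ℕ) :
    strandMul ⟨S, T, φ⟩ ⟨T, V, ψ⟩ =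
      if inversions S φ + inversions T ψ = inversions S (ψ ∘ φ) then some ⟨S, V, ψ ∘ φ⟩
      else none := by
  simp [strandMul]

theorem strands_algebra_assoc_general
    (S T V W : Finset ℕ)
    (φ ψ χ : ℕ → ℕ)
    (hφ : Set.BijOn φ S T) (hψ : Set.BijOn ψ T V) (hχ : Set.BijOn χ V W) :
    (strandMul ⟨S, T, φ⟩ ⟨T, V, ψ⟩).bind (fun z => strandMul z ⟨V, W, χ⟩) =
      (strandMul ⟨T, V, ψ⟩ ⟨V, W, χ⟩).bind (fun z => strandMul ⟨S, T, φ⟩ z) := by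
  have key := inversions_additive_assoc hφ hψ hχ.injOn
  rw [strandMul_mk, strandMul_mk]
  split_ifs with hφψ hψχ hψχ <;> simp only [Option.bind_some, Option.bind_none, strandMul_mk]
  · exact if_congr ⟨fun h => (key.1 ⟨hφψ, h⟩).2, fun h => (key.2 ⟨hψχ, h⟩).2⟩ rfl rfl
  · exact if_neg fun h => hψχ (key.1 ⟨hφψ, h⟩).1
  · exact (if_neg fun h => hφψ (key.2 ⟨hψχ, h⟩).1).symm

/-- Associativity of the strands algebra `A(n,k)` on generators:
`((S,T,φ)·(T,V,ψ))·(V,W,χ) = (S,T,φ)·((T,V,ψ)·(V,W,χ))`, where a product is zero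
unless the inversion counts are additive. -/
theorem strands_algebra_assoc
    (n k : ℕ) (S T V W : Finset ℕ)
    (hS : S ⊆ Finset.range n) (hT : T ⊆ Finset.range n)
    (hV : V ⊆ Finset.range n) (hW : W ⊆ Finset.range n)
    (hkS : S.card = k) (hkT : T.card = k) (hkV : V.card = k) (hkW : W.card = k)
    (φ ψ χ : ℕ → ℕ)
    (hφ : Set.BijOn φ S T) (hψ : Set.BijOn ψ T V) (hχ : Set.BijOn χ V W) :
    (strandMul ⟨S, T, φ⟩ ⟨T, V, ψ⟩).bind (fun z => strandMul z ⟨V, W, χ⟩) =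
      (strandMul ⟨T, V, ψ⟩ ⟨V, W, χ⟩).bind (fun z => strandMul ⟨S, T, φ⟩ z) :=
  strands_algebra_assoc_general S T V W φ ψ χ hφ hψ hχ
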